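/- Let G be a plane graph with all zigzags oriented. Then for every vertex, the number of type II edges incident to it is even, and for every face, the number of type I edges on its boundary is even. -/

import Mathlib

/-- A (connected) plane graph encoded as a combinatorial map on its set of darts
(directed edges).  `σ` rotates the darts around their initial vertex
(counter-clockwise), `α` is the fixed-point free involution exchanging the two
darts of every edge.  Vertices, edges and faces are the orbits of `σ`, `α` and
`σ * α` respectively; planarity is encoded by the Euler relation `V - E + F = 2`. -/
structure PlaneMap where
  D : Type
  instFin : Fintype D
  instDec : DecidableEq D
  σ : Equiv.Perm D
  α : Equiv.Perm D
  α_invol : ∀ d, α (α d) = d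
  α_nofix : ∀ d, α d ≠ d
  euler : (Nat.card (MulAction.orbitRel.Quotient (Subgroup.zpowers σ) D) : ℤ)
      - (Nat.card (MulAction.orbitRel.Quotient (Subgroup.zpowers α) D) : ℤ)
      + (Nat.card (MulAction.orbitRel.Quotient (Subgroup.zpowers (σ * α)) D) : ℤ) = 2

attribute [instance] PlaneMap.instFin PlaneMap.instDec

namespace PlaneMap

/-- The states of zigzag traversals: a dart being traversed, together with a
boolean telling whether the next turn is a left turn. -/
abbrev S (M : PlaneMap) : Type := M.D × Bool

/-- Alternately turning left or right at the end of the current dart. -/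
def turn (M : PlaneMap) : Equiv.Perm M.S where
  toFun s := (if s.2 then M.σ s.1 else M.σ⁻¹ s.1, !s.2)
  invFun s := (if s.2 then M.σ s.1 else M.σ⁻¹ s.1, !s.2)
  left_inv := by rintro ⟨d, b⟩; cases b <;> simp
  right_inv := by rintro ⟨d, b⟩; cases b <;> simp

/-- Moving to the other end of the current edge. -/
def flip (M : PlaneMap) : Equiv.Perm M.S := (M.α).prodCongr (Equiv.refl Bool)

/-- The zigzag (left-right path) successor map: go to the other end of the
current edge, then turn alternately left and right.  The orbits of `zig`
are the (directed) zigzags of the plane graph. -/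
def zig (M : PlaneMap) : Equiv.Perm M.S := (M.flip).trans M.turn

/-- Reversal of a zigzag state: same edge, opposite direction, opposite turn. -/
def rev (M : PlaneMap) : Equiv.Perm M.S :=
  (M.α).prodCongr (Function.Involutive.toPerm Bool.not Bool.not_not)

/-- An orientation of all zigzags of `M`: a set of states which is stable under
the zigzag successor and contains exactly one of the two opposite versions of
each traversal. -/
def IsOrientation (M : PlaneMap) (O : Set M.S) : Prop :=
  (∀ s, M.zig s ∈ O ↔ s ∈ O) ∧ (∀ s, Xor' (s ∈ O) (M.rev s ∈ O))

/-- The edge of the dart `d` is of type I w.r.t. the orientation `O`: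
the two chosen traversals of the edge go in opposite directions. -/
def TypeI (M : PlaneMap) (O : Set M.S) (d : M.D) : Prop :=
  ∃ b, (d, b) ∈ O ∧ (M.α d, b) ∈ O

/-- The edge of the dart `d` is of type II w.r.t. the orientation `O`:
the two chosen traversals of the edge go in the same direction. -/
def TypeII (M : PlaneMap) (O : Set M.S) (d : M.D) : Prop :=
  ∃ e, (e = d ∨ e = M.α d) ∧ ((e, true) ∈ O ∧ (e, false) ∈ O)

/-- A plane graph is cubic (`3`-valent) iff every `σ`-orbit has size `3`. -/
def Cubic (M : PlaneMap) : Prop := ∀ d, M.σ (M.σ (M.σ d)) = d ∧ M.σ d ≠ d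

end PlaneMap

/-!
Write `k d` for `(d, true) ∈ O`. Stability of `O` under `zig`, together with the choice of exactly
one of every two reversed traversals, forces `k` to alternate around each vertex:
`k (σ d) ↔ ¬ k d`, and likewise `k (α (σ d)) ↔ ¬ k (α d)`. An edge is of type II iff `k d` and
`k (α d)` differ, which is therefore constant around a vertex, and a vertex admitting an
alternating `k` has even degree. An edge is of type I iff `k d ↔ k (α d)`, i.e. iff `k` changes
from `d` to `σ (α d)`; so the type I edges of a face are the sign changes of `k` along a cycle of
`σ * α`, and there is an even number of those.
-/

namespace Equiv.Perm

variable {X : Type*} (g : Perm X)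

theorem SameCycle.apply_iff_of_forall {Q : X → Prop} (hQ : ∀ x, Q (g x) ↔ Q x) {a b : X}
    (h : g.SameCycle a b) : Q a ↔ Q b := by
  obtain ⟨n, rfl⟩ := h
  induction n using Int.induction_on with
  | zero => simp
  | succ n ih => rw [ih, add_comm, zpow_add, zpow_one, mul_apply, hQ]
  | pred n ih =>
    rw [ih, ← hQ ((g ^ (-(n : ℤ) - 1)) a), ← mul_apply, ← zpow_one_add, add_sub_cancel]

theorem even_card_not_iff_apply [Finite X] (f : X → Prop) :
    Even (Nat.card {x // ¬(f x ↔ f (g x))}) := by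
  classical
  have := Fintype.ofFinite X
  rw [Nat.card_eq_fintype_card, Fintype.card_subtype, even_iff_two_dvd,
    ← ZMod.natCast_eq_zero_iff, Finset.card_filter, Nat.cast_sum]
  calc ∑ x, (((if ¬(f x ↔ f (g x)) then 1 else 0 : ℕ)) : ZMod 2)
      = ∑ x, ((if f x then 1 else 0) + (if f (g x) then 1 else 0)) :=
        Finset.sum_congr rfl fun x _ => by by_cases f x <;> by_cases f (g x) <;> simp_all; decide
    _ = 2 * ∑ x, (if f x then 1 else 0) := by
        rw [Finset.sum_add_distrib, Equiv.sum_comp g (fun x => if f x then (1 : ZMod 2) else 0),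
          two_mul]
    _ = 0 := by rw [show (2 : ZMod 2) = 0 from rfl, zero_mul]

theorem even_card_sameCycle_not_iff_apply [Finite X] (f : X → Prop) (x₀ : X) :
    Even (Nat.card {x // g.SameCycle x₀ x ∧ ¬(f x ↔ f (g x))}) := by
  have h := even_card_not_iff_apply
    (g.subtypePerm (p := g.SameCycle x₀) fun _ => sameCycle_apply_right) fun x => f x.1
  rwa [← Nat.card_congr (Equiv.subtypeSubtypeEquivSubtypeInter (g.SameCycle x₀)
    fun x => ¬(f x ↔ f (g x)))]

theorem even_card_sameCycle_of_apply_iff_not [Finite X] {f : X → Prop}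
    (hf : ∀ x, f (g x) ↔ ¬f x) (x₀ : X) : Even (Nat.card {x // g.SameCycle x₀ x}) := by
  have h := g.even_card_sameCycle_not_iff_apply f x₀
  rwa [Nat.card_congr (Equiv.subtypeEquivRight (q := g.SameCycle x₀) fun x => by
    rw [hf x]; tauto)] at h

end Equiv.Perm

namespace PlaneMap

variable {M : PlaneMap} {O : Set M.S}

namespace IsOrientation

theorem mem_false_iff (hO : M.IsOrientation O) (d : M.D) :
    (d, false) ∈ O ↔ (M.α d, true) ∉ O := by
  have hrev : M.rev (M.α d, true) = (d, false) := Prod.ext (M.α_invol d) rfl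
  have := xor_iff_not_iff'.mp (hO.2 (M.α d, true))
  rwa [hrev, Iff.comm] at this

theorem mem_sigma_true_iff (hO : M.IsOrientation O) (d : M.D) :
    (M.σ d, true) ∈ O ↔ (d, true) ∉ O := by
  have hzig : M.zig (M.α (M.σ d), false) = (d, true) := by
    simp [zig, flip, turn, M.α_invol]
  rw [← hzig, hO.1, hO.mem_false_iff, M.α_invol, not_not]

theorem mem_alpha_sigma_true_iff (hO : M.IsOrientation O) (d : M.D) :
    (M.α (M.σ d), true) ∈ O ↔ (M.α d, true) ∉ O := by
  have hzig : M.zig (M.α d, true) = (M.σ d, false) := by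
    simp [zig, flip, turn, M.α_invol]
  rw [← not_iff_not, ← hO.mem_false_iff, ← hzig, hO.1, not_not]

theorem typeI_iff (hO : M.IsOrientation O) (d : M.D) :
    M.TypeI O d ↔ ((d, true) ∈ O ↔ (M.α d, true) ∈ O) := by
  have hd := hO.mem_false_iff d
  have hαd := hO.mem_false_iff (M.α d)
  rw [M.α_invol] at hαd
  constructor
  · rintro ⟨(_ | _), h, hα⟩ <;> tauto
  · intro h
    by_cases hk : (d, true) ∈ O
    · exact ⟨true, hk, h.mp hk⟩
    · exact ⟨false, hd.mpr (by tauto), hαd.mpr hk⟩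

theorem typeII_iff (hO : M.IsOrientation O) (d : M.D) :
    M.TypeII O d ↔ ¬((d, true) ∈ O ↔ (M.α d, true) ∈ O) := by
  have hd := hO.mem_false_iff d
  have hαd := hO.mem_false_iff (M.α d)
  rw [M.α_invol] at hαd
  constructor
  · rintro ⟨e, (rfl | rfl), h, h'⟩ <;> tauto
  · intro h
    by_cases hk : (d, true) ∈ O
    · exact ⟨d, Or.inl rfl, hk, hd.mpr (by tauto)⟩
    · exact ⟨M.α d, Or.inr rfl, by tauto, hαd.mpr hk⟩

theorem typeII_sigma_iff (hO : M.IsOrientation O) (d : M.D) :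
    M.TypeII O (M.σ d) ↔ M.TypeII O d := by
  rw [hO.typeII_iff, hO.typeII_iff, hO.mem_sigma_true_iff, hO.mem_alpha_sigma_true_iff]
  tauto

theorem typeI_iff_not_iff_mem_face_succ (hO : M.IsOrientation O) (d : M.D) :
    M.TypeI O d ↔ ¬((d, true) ∈ O ↔ ((M.σ * M.α) d, true) ∈ O) := by
  rw [hO.typeI_iff, Equiv.Perm.mul_apply, hO.mem_sigma_true_iff]
  tauto

theorem even_card_typeII_at_vertex (hO : M.IsOrientation O) (d₀ : M.D) :
    Even (Nat.card {d : M.D // M.σ.SameCycle d₀ d ∧ M.TypeII O d}) := by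
  by_cases h₀ : M.TypeII O d₀
  · have hall : ∀ d, M.σ.SameCycle d₀ d → M.TypeII O d := fun d hd =>
      (hd.apply_iff_of_forall _ hO.typeII_sigma_iff).mp h₀
    rw [Nat.card_congr (Equiv.subtypeEquivRight (q := M.σ.SameCycle d₀) fun d =>
      and_iff_left_of_imp (hall d))]
    exact M.σ.even_card_sameCycle_of_apply_iff_not (f := fun d => (d, true) ∈ O)
      hO.mem_sigma_true_iff d₀
  · have hnone : IsEmpty {d : M.D // M.σ.SameCycle d₀ d ∧ M.TypeII O d} :=
      ⟨fun d => h₀ ((d.2.1.apply_iff_of_forall _ hO.typeII_sigma_iff).mpr d.2.2)⟩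
    rw [Nat.card_of_isEmpty]
    exact .zero

theorem even_card_typeI_on_face (hO : M.IsOrientation O) (d₀ : M.D) :
    Even (Nat.card {d : M.D // (M.σ * M.α).SameCycle d₀ d ∧ M.TypeI O d}) := by
  rw [Nat.card_congr (Equiv.subtypeEquivRight fun d =>
    and_congr_right' (hO.typeI_iff_not_iff_mem_face_succ d))]
  exact (M.σ * M.α).even_card_sameCycle_not_iff_apply _ d₀

end IsOrientation

end PlaneMap

open PlaneMap in
/-- **Parity of edge types at vertices and faces.**
Let `M` be a plane graph with all zigzags oriented by `O`.  Then for every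
vertex (the `σ`-orbit of a dart `d₀`) the number of incident type II edges is
even, and for every face (the `σ * α`-orbit of a dart `d₀`) the number of
type I edges on its boundary is even. -/
theorem typeII_even_at_vertices_typeI_even_on_faces (M : PlaneMap)
    (O : Set M.S) (hO : M.IsOrientation O) :
    (∀ d₀ : M.D,
        Even (Nat.card {d : M.D // M.σ.SameCycle d₀ d ∧ M.TypeII O d})) ∧
    (∀ d₀ : M.D,
        Even (Nat.card {d : M.D // (M.σ * M.α).SameCycle d₀ d ∧ M.TypeI O d})) :=
  ⟨hO.even_card_typeII_at_vertex, hO.even_card_typeI_on_face⟩
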